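/- arXiv:1809.09365 — 4 statements merged into one kernel-verified Lean document; each statement's English description precedes it below -/
import Mathlib

section
/- Under the same system of coefficient equations, one has a₃ = a₂² + U₁(t)(c₂ − d₂)/(2(2λ+μ+6ξδ)). -/
theorem stmt_10 (lam mu del t : ℝ) (hlam : 1 ≤ lam) (hmu : 0 ≤ mu) (hdel : 0 ≤ del)
    (ht : 1 / 2 < t ∧ t < 1)
    (xi : ℝ) (hxi : xi = (2 * lam + mu) / (2 * lam + 1))
    (a2 a3 c1 c2 d1 d2 : ℂ)
    (h1 : ((lam + mu + 2 * xi * del : ℝ) : ℂ) * a2 = (2 * t : ℝ) * c1)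
    (h2 : ((2 * lam + mu : ℝ) : ℂ) * (((mu - 1) / 2 : ℝ) * a2 ^ 2 + ((1 + 6 * del / (2 * lam + 1) : ℝ)) * a3)
        = (2 * t : ℝ) * c2 + ((4 * t ^ 2 - 1 : ℝ)) * c1 ^ 2)
    (h3 : -(((lam + mu + 2 * xi * del : ℝ) : ℂ)) * a2 = (2 * t : ℝ) * d1)
    (h4 : ((2 * lam + mu : ℝ) : ℂ) * (((mu + 3) / 2 + 12 * del / (2 * lam + 1) : ℝ) * a2 ^ 2 - ((1 + 6 * del / (2 * lam + 1) : ℝ)) * a3)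
        = (2 * t : ℝ) * d2 + ((4 * t ^ 2 - 1 : ℝ)) * d1 ^ 2) :
    a3 = a2 ^ 2 + ((2 * t : ℝ) : ℂ) * (c2 - d2) / (2 * ((2 * lam + mu + 6 * xi * del : ℝ) : ℂ)) := by
  subst hxi
  have ht0 : (0:ℝ) < t := lt_trans (by norm_num) ht.1
  have ht2 : ((2 * t : ℝ) : ℂ) ≠ 0 := by
    exact_mod_cast (by positivity : (2 * t : ℝ) ≠ 0)
  have hd1 : d1 = -c1 := by
    have h5 : ((2 * t : ℝ) : ℂ) * (d1 + c1) = 0 := by push_cast at h1 h3 ⊢; linear_combination -h1 - h3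
    rcases mul_eq_zero.1 h5 with h | h
    · exact absurd h ht2
    · exact eq_neg_of_add_eq_zero_left h
  subst hd1
  have hKpos : (0:ℝ) < 2 * lam + mu + 6 * ((2 * lam + mu) / (2 * lam + 1)) * del := by
    have ha : (0:ℝ) < 2 * lam + mu := by linarith
    have hb : (0:ℝ) < 2 * lam + 1 := by linarith
    positivity
  have hK : ((2 * lam + mu + 6 * ((2 * lam + mu) / (2 * lam + 1)) * del : ℝ) : ℂ) ≠ 0 := by
    exact_mod_cast hKpos.ne'
  have hkey : ((2 * lam + mu + 6 * ((2 * lam + mu) / (2 * lam + 1)) * del : ℝ) : ℂ) * (2 * (a3 - a2 ^ 2))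
      = ((2 * t : ℝ) : ℂ) * (c2 - d2) := by
    push_cast at h2 h4 ⊢
    linear_combination h2 - h4
  rw [eq_comm, ← hkey, mul_comm (2:ℂ)
    ((2 * lam + mu + 6 * ((2 * lam + mu) / (2 * lam + 1)) * del : ℝ) : ℂ),
    mul_div_mul_left _ _ hK]
  ring
end

section
/- Specializing the |a₂| bound to λ=1, μ=1, δ=0: if a₂, c₂, d₂ ∈ ℂ with |c₂| ≤ 1, |d₂| ≤ 1, t ∈ (1/2,1), and [6 − 2(4t²−1)·4/(4t²)]a₂² = 2t(c₂+d₂), then |a₂| ≤ t√(2t)/√(1−t²). -/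
/-!
With `U₁(t) = 2t` and `U₂(t) = 4t² - 1` the coefficient of `a₂²` collapses to `2(1 - t²)/t²`, which
is positive on `(1/2, 1)`. Taking norms and using `‖c₂ + d₂‖ ≤ 2` gives
`‖a₂‖² ≤ 2 · 2t / (2(1 - t²)/t²) = t² · 2t / (1 - t²)`, and the bound follows on taking square roots.
-/

lemma norm_sq_le_of_ofReal_mul_sq_eq_ofReal_mul_add {k s : ℝ} (hk : 0 < k) (hs : 0 ≤ s)
    {a c d : ℂ} (hc : ‖c‖ ≤ 1) (hd : ‖d‖ ≤ 1) (h : (k : ℂ) * a ^ 2 = (s : ℂ) * (c + d)) :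
    ‖a‖ ^ 2 ≤ 2 * s / k := by
  have hnorm : k * ‖a‖ ^ 2 = s * ‖c + d‖ := by
    simpa only [norm_mul, norm_pow, Complex.norm_real, Real.norm_of_nonneg hk.le,
      Real.norm_of_nonneg hs] using congrArg norm h
  have hcd : ‖c + d‖ ≤ 2 := (norm_add_le c d).trans (by linarith)
  rw [le_div_iff₀ hk]
  nlinarith

lemma six_sub_chebyshev_coeff_eq {t : ℝ} (ht : t ≠ 0) :
    6 - 2 * (4 * t ^ 2 - 1) * 4 / (4 * t ^ 2) = 2 * (1 - t ^ 2) / t ^ 2 := by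
  field_simp
  ring

lemma Real.mul_sqrt_div_sqrt_eq_sqrt {t v : ℝ} (ht : 0 ≤ t) (hv : 0 ≤ v) (u : ℝ) :
    t * √u / √v = √(t ^ 2 * u / v) := by
  rw [Real.sqrt_div' _ hv, Real.sqrt_mul (sq_nonneg t), Real.sqrt_sq ht]

theorem stmt_13 (t : ℝ) (ht : 1 / 2 < t ∧ t < 1)
    (a2 c2 d2 : ℂ) (hc2 : ‖c2‖ ≤ 1) (hd2 : ‖d2‖ ≤ 1)
    (heq : ((6 - 2 * (4 * t ^ 2 - 1) * 4 / (4 * t ^ 2) : ℝ) : ℂ) * a2 ^ 2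
        = ((2 * t : ℝ) : ℂ) * (c2 + d2)) :
    ‖a2‖ ≤ t * Real.sqrt (2 * t) / Real.sqrt (1 - t ^ 2) := by
  obtain ⟨ht_gt, ht_lt⟩ := ht
  have ht_pos : 0 < t := by linarith
  have h_one_sub : 0 < 1 - t ^ 2 := by nlinarith
  rw [six_sub_chebyshev_coeff_eq ht_pos.ne'] at heq
  have hsq := norm_sq_le_of_ofReal_mul_sq_eq_ofReal_mul_add (by positivity) (by positivity)
    hc2 hd2 heq
  rw [Real.mul_sqrt_div_sqrt_eq_sqrt ht_pos.le h_one_sub.le]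
  refine Real.le_sqrt_of_sq_le (hsq.trans_eq ?_)
  field_simp
end

section
/- Specializing to λ=1, μ=1, δ=0 and η ∈ ℝ with |η−1| ≥ (1−t²)/(3t²): if a₂, a₃, c₂, d₂ ∈ ℂ satisfy |c₂| ≤ 1, |d₂| ≤ 1, (2(1−t²)/t²)a₂² = 2t(c₂+d₂), and a₃ = a₂² + (t/3)(c₂−d₂), then |a₃ − η a₂²| ≤ 2|η−1|t³/(1−t²). -/
/-!
The first relation gives `a₂² = T (c₂ + d₂)` with `T = t³/(1 - t²)`, so
`a₃ - η a₂² = (1 - η) T (c₂ + d₂) + (t/3)(c₂ - d₂)`. For reals with `|b| ≤ |a|` and vectors of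
norm at most one, `‖a (c + d) + b (c - d)‖ ≤ |a + b| + |a - b| = 2 |a|`, and the hypothesis on
`η` is exactly `t/3 ≤ |1 - η| T`.
-/

theorem abs_add_add_abs_sub_of_abs_le {a b : ℝ} (h : |b| ≤ |a|) :
    |a + b| + |a - b| = 2 * |a| := by
  rcases abs_le.mp h with ⟨hb₁, hb₂⟩
  rcases le_total 0 a with ha | ha
  · rw [abs_of_nonneg ha] at hb₁ hb₂ ⊢
    rw [abs_of_nonneg (by linarith), abs_of_nonneg (by linarith)]
    ring
  · rw [abs_of_nonpos ha] at hb₁ hb₂ ⊢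
    rw [abs_of_nonpos (by linarith), abs_of_nonpos (by linarith)]
    ring

theorem norm_smul_add_add_smul_sub_le {E : Type*} [SeminormedAddCommGroup E] [NormedSpace ℝ E]
    {a b : ℝ} (hab : |b| ≤ |a|) {c d : E} (hc : ‖c‖ ≤ 1) (hd : ‖d‖ ≤ 1) :
    ‖a • (c + d) + b • (c - d)‖ ≤ 2 * |a| := by
  have hsplit : a • (c + d) + b • (c - d) = (a + b) • c + (a - b) • d := by
    simp only [smul_add, smul_sub, add_smul, sub_smul]
    abel
  calc ‖a • (c + d) + b • (c - d)‖
      ≤ |a + b| * ‖c‖ + |a - b| * ‖d‖ := by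
        rw [hsplit, ← Real.norm_eq_abs, ← Real.norm_eq_abs, ← norm_smul, ← norm_smul]
        exact norm_add_le _ _
    _ ≤ |a + b| * 1 + |a - b| * 1 := by gcongr
    _ = 2 * |a| := by rw [mul_one, mul_one, abs_add_add_abs_sub_of_abs_le hab]

theorem stmt_16 (t eta : ℝ) (ht : 1 / 2 < t ∧ t < 1)
    (heta : |eta - 1| ≥ (1 - t ^ 2) / (3 * t ^ 2))
    (a2 a3 c2 d2 : ℂ) (hc2 : ‖c2‖ ≤ 1) (hd2 : ‖d2‖ ≤ 1)
    (h1 : ((2 * (1 - t ^ 2) / t ^ 2 : ℝ) : ℂ) * a2 ^ 2 = ((2 * t : ℝ) : ℂ) * (c2 + d2))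
    (h2 : a3 = a2 ^ 2 + ((t / 3 : ℝ) : ℂ) * (c2 - d2)) :
    ‖a3 - (eta : ℂ) * a2 ^ 2‖ ≤ 2 * |eta - 1| * t ^ 3 / (1 - t ^ 2) := by
  obtain ⟨ht₀, ht₁⟩ : 0 < t ∧ 0 < 1 - t ^ 2 := ⟨by linarith, by nlinarith⟩
  set T := t ^ 3 / (1 - t ^ 2) with hT
  have ha2 : a2 ^ 2 = (T : ℂ) * (c2 + d2) := by
    have hcoef : ((2 * (1 - t ^ 2) / t ^ 2 : ℝ) : ℂ) ≠ 0 := by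
      exact_mod_cast (by positivity : 2 * (1 - t ^ 2) / t ^ 2 ≠ 0)
    apply mul_left_cancel₀ hcoef
    rw [h1, ← mul_assoc, ← Complex.ofReal_mul]
    congr 2
    rw [hT]
    field_simp
  have hcoeffs : |t / 3| ≤ |(1 - eta) * T| := by
    rw [abs_mul, abs_sub_comm, abs_of_pos (by positivity : 0 < t / 3),
      abs_of_pos (by positivity : 0 < T)]
    calc t / 3 = (1 - t ^ 2) / (3 * t ^ 2) * T := by rw [hT]; field_simp
      _ ≤ |eta - 1| * T := by gcongr
  have hrw : a3 - (eta : ℂ) * a2 ^ 2 = ((1 - eta) * T) • (c2 + d2) + (t / 3) • (c2 - d2) := by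
    rw [h2, ha2, Complex.real_smul, Complex.real_smul]
    push_cast
    ring
  calc ‖a3 - (eta : ℂ) * a2 ^ 2‖ ≤ 2 * |(1 - eta) * T| := by
        rw [hrw]; exact norm_smul_add_add_smul_sub_le hcoeffs hc2 hd2
    _ = 2 * |eta - 1| * t ^ 3 / (1 - t ^ 2) := by
        rw [abs_mul, abs_sub_comm, abs_of_pos (by positivity : 0 < T), hT]
        ring
end

section
/- Specializing to λ=1, μ=1, δ=0 and η ∈ ℝ with |η−1| ≤ (1−t²)/(3t²): if a₂, a₃, c₂, d₂ ∈ ℂ satisfy |c₂| ≤ 1, |d₂| ≤ 1, (2(1−t²)/t²)a₂² = 2t(c₂+d₂), and a₃ = a₂² + (t/3)(c₂−d₂), then |a₃ − η a₂²| ≤ 2t/3. -/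
/-!
Eliminating `a₂²` with the first relation writes `a₃ - η a₂²` as `(A + t/3) c₂ + (A - t/3) d₂`
with the real number `A = (1 - η) t³ / (1 - t²)`. The hypothesis on `η` is exactly `|A| ≤ t/3`,
so both coefficients have fixed signs and their absolute values add up to `2t/3`.
-/

theorem norm_smul_add_smul_le_of_abs_le {E : Type*} [SeminormedAddCommGroup E] [NormedSpace ℝ E]
    {A s : ℝ} (hA : |A| ≤ s) {x y : E} (hx : ‖x‖ ≤ 1) (hy : ‖y‖ ≤ 1) :
    ‖(A + s) • x + (A - s) • y‖ ≤ 2 * s := by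
  obtain ⟨hlo, hhi⟩ := abs_le.mp hA
  calc ‖(A + s) • x + (A - s) • y‖
      ≤ |A + s| * ‖x‖ + |A - s| * ‖y‖ := by
        simpa only [norm_smul, Real.norm_eq_abs] using norm_add_le ((A + s) • x) ((A - s) • y)
    _ ≤ |A + s| + |A - s| :=
        add_le_add (mul_le_of_le_one_right (abs_nonneg _) hx) (mul_le_of_le_one_right (abs_nonneg _) hy)
    _ = 2 * s := by rw [abs_of_nonneg (by linarith), abs_of_nonpos (by linarith)]; ring

theorem abs_one_sub_mul_div_le {t η : ℝ} (ht : 0 < t) (ht1 : t ^ 2 < 1)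
    (hη : |η - 1| ≤ (1 - t ^ 2) / (3 * t ^ 2)) :
    |(1 - η) * t ^ 3 / (1 - t ^ 2)| ≤ t / 3 := by
  have h1t : 0 < 1 - t ^ 2 := by linarith
  rw [abs_div, abs_mul, abs_sub_comm 1 η, abs_of_pos h1t, abs_of_pos (pow_pos ht 3), div_le_iff₀ h1t]
  calc |η - 1| * t ^ 3 ≤ (1 - t ^ 2) / (3 * t ^ 2) * t ^ 3 := by gcongr
    _ = t / 3 * (1 - t ^ 2) := by field_simp

theorem stmt_17 (t eta : ℝ) (ht : 1 / 2 < t ∧ t < 1)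
    (heta : |eta - 1| ≤ (1 - t ^ 2) / (3 * t ^ 2))
    (a2 a3 c2 d2 : ℂ) (hc2 : ‖c2‖ ≤ 1) (hd2 : ‖d2‖ ≤ 1)
    (h1 : ((2 * (1 - t ^ 2) / t ^ 2 : ℝ) : ℂ) * a2 ^ 2 = ((2 * t : ℝ) : ℂ) * (c2 + d2))
    (h2 : a3 = a2 ^ 2 + ((t / 3 : ℝ) : ℂ) * (c2 - d2)) :
    ‖a3 - (eta : ℂ) * a2 ^ 2‖ ≤ 2 * t / 3 := by
  obtain ⟨ht_half, ht_lt_one⟩ := ht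
  have ht0 : 0 < t := by linarith
  have ht1 : t ^ 2 < 1 := by nlinarith
  set A : ℝ := (1 - eta) * t ^ 3 / (1 - t ^ 2)
  have ha2 : a2 ^ 2 = ((t ^ 3 / (1 - t ^ 2) : ℝ) : ℂ) * (c2 + d2) := by
    have ht' : (t : ℂ) ≠ 0 := by exact_mod_cast ht0.ne'
    have h1t : (1 : ℂ) - (t : ℂ) ^ 2 ≠ 0 := by exact_mod_cast (sub_pos.mpr ht1).ne'
    push_cast at h1 ⊢
    field_simp at h1 ⊢
    linear_combination h1
  have key : a3 - (eta : ℂ) * a2 ^ 2 = (A + t / 3) • c2 + (A - t / 3) • d2 := by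
    simp only [A, Complex.real_smul, h2, ha2]
    push_cast
    ring
  rw [key, mul_div_assoc]
  exact norm_smul_add_smul_le_of_abs_le (abs_one_sub_mul_div_le ht0 ht1 heta) hc2 hd2
end
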